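/- arXiv:1012.2693 — 2 statements merged into one kernel-verified Lean document; each statement's English description precedes it below -/
import Mathlib

section
/- Let 3 ≤ a ≤ b be integers, n = 3b(b−a+2), and let G be obtained from the n-cycle C_n: v_1,...,v_n plus two vertices v, w each adjacent to all cycle vertices, by attaching a path u_1,...,u_{a−1} with u_{a−1} identified with v. Then src(G) = b. -/
/-!
Every walk leaving the pendant path `u_1, …, u_{a-1} = v` uses all of its edges, so in a strong
rainbow colouring with `k` colours these `a - 2` edges get distinct colours, and none of them
reappears on an edge `v v_i` (take a geodesic from `v_i` to `u_1`). The cycle vertices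
`v_{3t+1}`, `t < b(b-a+2)`, are pairwise non-adjacent without common cycle neighbours, so any two
of them are joined only by geodesics through `v` or `w`; hence their colour pairs
`(c(v v_i), c(w v_i))` are distinct, and `b(b-a+2) ≤ (k-a+2) k` forces `k ≥ b`.
Conversely, colour the path edges `0, …, a-3`, give the `t`-th block of three consecutive cycle
vertices its own pair of hub colours from `[a-2, b) × [0, b)`, and alternate two colours along the
cycle so that the two ends of a block are joined through its middle vertex.
-/

namespace RC

variable {V : Type*}

/-- A walk is rainbow under edge coloring `c` if its edges receive pairwise distinct colors. -/
def IsRainbow {G : SimpleGraph V} (c : Sym2 V → ℕ) {u v : V} (p : G.Walk u v) : Prop :=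
  (p.edges.map c).Nodup

/-- `c` is a rainbow coloring: every pair of vertices is joined by a rainbow path. -/
def IsRainbowColoring (G : SimpleGraph V) (c : Sym2 V → ℕ) : Prop :=
  ∀ u v : V, ∃ p : G.Walk u v, p.IsPath ∧ IsRainbow c p

/-- `c` is a strong rainbow coloring: every pair of vertices is joined by a rainbow geodesic. -/
def IsStrongRainbowColoring (G : SimpleGraph V) (c : Sym2 V → ℕ) : Prop :=
  ∀ u v : V, ∃ p : G.Walk u v, p.IsPath ∧ p.length = G.dist u v ∧ IsRainbow c p

/-- `c` uses at most `k` colors (namely `0, …, k-1`) on the edges of `G`. -/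
def UsesColors (G : SimpleGraph V) (c : Sym2 V → ℕ) (k : ℕ) : Prop :=
  ∀ e ∈ G.edgeSet, c e < k

/-- The rainbow connection number `rc(G)`. -/
noncomputable def rc (G : SimpleGraph V) : ℕ :=
  sInf {k | ∃ c : Sym2 V → ℕ, UsesColors G c k ∧ IsRainbowColoring G c}

/-- The strong rainbow connection number `src(G)`. -/
noncomputable def src (G : SimpleGraph V) : ℕ :=
  sInf {k | ∃ c : Sym2 V → ℕ, UsesColors G c k ∧ IsStrongRainbowColoring G c}

/-- Vertices of the construction: cycle vertices `Fin n`, pendant-path vertices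
`u_1, …, u_{a-2}` (as `Fin (a-2)`, with `u_{j+1}` coded by `j`), and the two hubs
`v` (coded `true`, playing the role of `u_{a-1}`) and `w` (coded `false`). -/
abbrev ConV (a n : ℕ) := Fin n ⊕ (Fin (a - 2) ⊕ Bool)

/-- the cycle vertex `v_{i+1}` -/
abbrev cyc {a n : ℕ} (i : Fin n) : ConV a n := Sum.inl i
/-- the path vertex `u_{j+1}` -/
abbrev pth {a n : ℕ} (j : Fin (a - 2)) : ConV a n := Sum.inr (Sum.inl j)
/-- the hub `v` (identified with `u_{a-1}`) -/
abbrev hubv (a n : ℕ) : ConV a n := Sum.inr (Sum.inr true)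
/-- the hub `w` -/
abbrev hubw (a n : ℕ) : ConV a n := Sum.inr (Sum.inr false)

def conRel (a n : ℕ) : ConV a n → ConV a n → Prop := fun x y =>
  match x, y with
  | Sum.inl i, Sum.inl j => (i.val + 1) % n = j.val
  | Sum.inl _, Sum.inr (Sum.inr _) => True
  | Sum.inr (Sum.inl j), Sum.inr (Sum.inl j') => j.val + 1 = j'.val
  | Sum.inr (Sum.inl j), Sum.inr (Sum.inr b) => b = true ∧ j.val + 1 = a - 2
  | _, _ => False

/-- The construction graph `G`: an `n`-cycle `v_1 … v_n`, hubs `v, w` adjacent to all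
cycle vertices (but not to each other), and a pendant path `u_1, …, u_{a-1}` with
`u_{a-1} = v`. -/
def ConG (a n : ℕ) : SimpleGraph (ConV a n) := SimpleGraph.fromRel (conRel a n)

open SimpleGraph

section General

variable {G : SimpleGraph V} {c : Sym2 V → ℕ} {u v x : V}

-- No path condition: a walk of length `dist` is automatically a path.
def HasRainbowGeodesic (G : SimpleGraph V) (c : Sym2 V → ℕ) (u v : V) : Prop :=
  ∃ p : G.Walk u v, p.length = G.dist u v ∧ IsRainbow c p

lemma isRainbow_cons_iff (h : G.Adj u x) (p : G.Walk x v) :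
    IsRainbow c (Walk.cons h p) ↔ c s(u, x) ∉ p.edges.map c ∧ IsRainbow c p := by
  simp [IsRainbow]

lemma IsRainbow.reverse {p : G.Walk u v} (hp : IsRainbow c p) : IsRainbow c p.reverse := by
  simpa [IsRainbow] using hp

lemma HasRainbowGeodesic.symm (h : HasRainbowGeodesic G c u v) : HasRainbowGeodesic G c v u := by
  obtain ⟨p, hlen, hp⟩ := h
  exact ⟨p.reverse, by rw [Walk.length_reverse, hlen, dist_comm], hp.reverse⟩

lemma hasRainbowGeodesic_self (u : V) : HasRainbowGeodesic G c u u :=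
  ⟨.nil, by simp, by simp [IsRainbow]⟩

lemma hasRainbowGeodesic_of_adj (h : G.Adj u v) : HasRainbowGeodesic G c u v :=
  ⟨h.toWalk, by simp [dist_eq_one_iff_adj.2 h], by simp [IsRainbow]⟩

lemma dist_eq_two (hne : u ≠ v) (hnadj : ¬ G.Adj u v) (hux : G.Adj u x) (hxv : G.Adj x v) :
    G.dist u v = 2 := by
  simp [SimpleGraph.dist, edist_eq_two_iff.2 ⟨hne, hnadj, x, hux, hxv.symm⟩]

lemma hasRainbowGeodesic_of_adj_adj (hne : u ≠ v) (hnadj : ¬ G.Adj u v) (hux : G.Adj u x)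
    (hxv : G.Adj x v) (hc : c s(u, x) ≠ c s(x, v)) : HasRainbowGeodesic G c u v :=
  ⟨.cons hux (.cons hxv .nil), by simp [dist_eq_two hne hnadj hux hxv], by simp [IsRainbow, hc]⟩

lemma isStrongRainbowColoring_of_forall (h : ∀ u v, HasRainbowGeodesic G c u v) :
    IsStrongRainbowColoring G c := fun u v =>
  let ⟨p, hlen, hp⟩ := h u v
  ⟨p, p.isPath_of_length_eq_dist hlen, hlen, hp⟩

lemma le_add_length_of_lipschitz {f : V → ℕ} (hf : ∀ x y, G.Adj x y → f x ≤ f y + 1)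
    (p : G.Walk u v) : f u ≤ f v + p.length := by
  induction p with
  | nil => simp
  | cons h _ ih => have := hf _ _ h; simp only [Walk.length_cons]; omega

lemma length_eq_dist_of_lipschitz {f : V → ℕ} (hf : ∀ x y, G.Adj x y → f x ≤ f y + 1)
    (p : G.Walk u v) (hp : p.length + f v ≤ f u) : p.length = G.dist u v := by
  obtain ⟨q, hq⟩ := p.reachable.exists_walk_length_eq_dist
  have := le_add_length_of_lipschitz hf q
  have := G.dist_le p
  omega

lemma src_eq_of_forall_le {k : ℕ} (c : Sym2 V → ℕ) (hck : UsesColors G c k)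
    (hc : IsStrongRainbowColoring G c)
    (hmin : ∀ c' k', UsesColors G c' k' → IsStrongRainbowColoring G c' → k ≤ k') :
    src G = k :=
  le_antisymm (Nat.sInf_le ⟨c, hck, hc⟩)
    (le_csInf ⟨k, c, hck, hc⟩ fun _ ⟨c', h1, h2⟩ => hmin c' _ h1 h2)

end General

section Graph

variable {a n : ℕ}

lemma adj_cyc_cyc_iff {i j : Fin n} :
    (ConG a n).Adj (cyc i) (cyc j) ↔ i ≠ j ∧ ((i.1 + 1) % n = j ∨ (j.1 + 1) % n = i) := by
  simp [ConG, conRel]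

lemma adj_cyc_hub {i : Fin n} (b : Bool) : (ConG a n).Adj (cyc i) (Sum.inr (Sum.inr b)) := by
  simp [ConG, conRel]

lemma not_adj_cyc_pth {i : Fin n} {j : Fin (a - 2)} : ¬ (ConG a n).Adj (cyc i) (pth j) := by
  simp [ConG, conRel]

lemma adj_pth_pth_iff {j j' : Fin (a - 2)} :
    (ConG a n).Adj (pth j) (pth j') ↔ j.1 + 1 = j' ∨ j'.1 + 1 = j := by
  simp only [ConG, fromRel_adj, ne_eq, Sum.inr.injEq, Sum.inl.injEq, conRel, and_iff_right_iff_imp]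
  omega

lemma adj_pth_hubv_iff {j : Fin (a - 2)} :
    (ConG a n).Adj (pth j) (hubv a n) ↔ j.1 + 1 = a - 2 := by
  simp [ConG, conRel]

lemma not_adj_pth_hubw {j : Fin (a - 2)} : ¬ (ConG a n).Adj (pth j) (hubw a n) := by
  simp [ConG, conRel]

-- The distance from `w`; being 1-Lipschitz along edges, it bounds all distances from below.
def depth (a : ℕ) : ConV a n → ℕ
  | Sum.inl _ => 1
  | Sum.inr (Sum.inl j) => a - j
  | Sum.inr (Sum.inr true) => 2
  | Sum.inr (Sum.inr false) => 0

lemma depth_le_of_adj {x y : ConV a n} (h : (ConG a n).Adj x y) :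
    depth a x ≤ depth a y + 1 := by
  rcases x with i | j | _ | _ <;> rcases y with i' | j' | _ | _ <;>
    simp [ConG, conRel, depth] at h ⊢ <;> omega

lemma adj_cyc_of_val_add_one {i i' : Fin n} (h : i.1 + 1 = i') :
    (ConG a n).Adj (cyc i) (cyc i') :=
  adj_cyc_cyc_iff.2
    ⟨Fin.ne_of_val_ne (by omega), .inl (by rw [Nat.mod_eq_of_lt (h ▸ i'.2), h])⟩

end Graph

section Path

variable {a n : ℕ}

-- `pathVert a n m` is `u_{m+1}`, so that `pathVert a n (a - 2) = v`.
def pathVert (a n m : ℕ) : ConV a n := if h : m < a - 2 then pth ⟨m, h⟩ else hubv a n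

lemma pathVert_of_lt {m : ℕ} (h : m < a - 2) : pathVert a n m = pth ⟨m, h⟩ := dif_pos h

lemma pathVert_of_le {m : ℕ} (h : a - 2 ≤ m) : pathVert a n m = hubv a n := dif_neg (by omega)

lemma pathVert_inj {m m' : ℕ} (hm : m ≤ a - 2) (hm' : m' ≤ a - 2)
    (h : pathVert a n m = pathVert a n m') : m = m' := by
  unfold pathVert at h
  split_ifs at h
  · simpa using h
  · simp at h
  · simp at h
  · omega

lemma depth_pathVert (ha : 2 ≤ a) {m : ℕ} (hm : m ≤ a - 2) :
    depth a (pathVert a n m) = a - m := by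
  unfold pathVert
  split_ifs
  · rfl
  · show 2 = a - m
    omega

lemma adj_pathVert_succ {m : ℕ} (hm : m + 1 ≤ a - 2) :
    (ConG a n).Adj (pathVert a n m) (pathVert a n (m + 1)) := by
  unfold pathVert
  split_ifs <;> simp [ConG, conRel] <;> omega

lemma adj_pathVert_cyc {m : ℕ} (hm : a - 2 ≤ m) (i : Fin n) :
    (ConG a n).Adj (pathVert a n m) (cyc i) := by
  rw [pathVert_of_le hm]
  exact (adj_cyc_hub true).symm

def pathEdge (a n m : ℕ) : Sym2 (ConV a n) := s(pathVert a n m, pathVert a n (m + 1))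

lemma pathEdge_inj {m m' : ℕ} (hm : m < a - 2) (hm' : m' < a - 2)
    (h : pathEdge a n m = pathEdge a n m') : m = m' := by
  rcases Sym2.eq_iff.1 h with ⟨h1, -⟩ | ⟨h1, h2⟩
  · exact pathVert_inj (by omega) (by omega) h1
  · have := pathVert_inj (by omega) (by omega) h1
    have := pathVert_inj (by omega) (by omega) h2
    omega

def pathWalk (a n j : ℕ) :
    (k : ℕ) → j + k ≤ a - 2 → (ConG a n).Walk (pathVert a n j) (pathVert a n (j + k))
  | 0, _ => .nil
  | k + 1, h => (pathWalk a n j k (by omega)).concat (adj_pathVert_succ (by omega))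

@[simp]
lemma length_pathWalk {j k : ℕ} (h : j + k ≤ a - 2) : (pathWalk a n j k h).length = k := by
  induction k with
  | zero => rfl
  | succ k ih => simp [pathWalk, ih]

lemma edges_pathWalk {j k : ℕ} (h : j + k ≤ a - 2) :
    (pathWalk a n j k h).edges = (List.range' j k).map (pathEdge a n) := by
  induction k with
  | zero => rfl
  | succ k ih => simp [pathWalk, ih, List.range'_concat, pathEdge, Nat.add_assoc]

lemma pathEdge_mem_edges {j : Fin (a - 2)} {y : ConV a n} (p : (ConG a n).Walk (pth j) y)
    (hy : ∀ j', y ≠ pth j') {m : ℕ} (hjm : j.1 ≤ m) (hm : m < a - 2) :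
    pathEdge a n m ∈ p.edges := by
  generalize hx : pth j = x at p
  induction p generalizing j with
  | nil => exact absurd hx.symm (hy j)
  | @cons x z y h q ih =>
    subst hx
    rw [Walk.edges_cons, List.mem_cons]
    rcases z with i | j' | _ | _
    · exact absurd h.symm not_adj_cyc_pth
    · rcases adj_pth_pth_iff.1 h with h' | h'
      · rcases hjm.eq_or_lt with rfl | hlt
        · obtain ⟨j', hj'⟩ := j'
          simp only at h'
          subst h'
          left
          simp [pathEdge, pathVert_of_lt hm, pathVert_of_lt hj']
        · exact .inr (ih hy (by omega) rfl)
      · exact .inr (ih hy (by omega) rfl)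
    · exact absurd h not_adj_pth_hubw
    · have hj := adj_pth_hubv_iff.1 h
      obtain rfl : m = j := by omega
      left
      simp [pathEdge, pathVert_of_lt hm, pathVert_of_le (show a - 2 ≤ j + 1 by omega)]

def cycWalk (a n j : ℕ) (hj : j ≤ a - 2) (i : Fin n) :
    (ConG a n).Walk (pathVert a n j) (cyc i) :=
  (pathWalk a n j (a - 2 - j) (by omega)).concat (adj_pathVert_cyc (by omega) i)

lemma length_cycWalk {j : ℕ} (hj : j ≤ a - 2) (i : Fin n) :
    (cycWalk a n j hj i).length = a - 2 - j + 1 := by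
  simp [cycWalk]

lemma dist_pathVert_cyc (ha : 2 ≤ a) {j : ℕ} (hj : j ≤ a - 2) (i : Fin n) :
    (ConG a n).dist (pathVert a n j) (cyc i) = a - 2 - j + 1 := by
  rw [← length_cycWalk hj i]
  refine (length_eq_dist_of_lipschitz (fun _ _ => depth_le_of_adj) _ ?_).symm
  rw [length_cycWalk, depth_pathVert ha hj]
  simp only [depth]
  omega

end Path

section Coloring

variable {a b n : ℕ}

def hubvColor (a b t : ℕ) : ℕ := a - 2 + t / b

-- `hubwColor b 0 = b - 1` avoids the path colours `0, …, a-3` and `hubvColor a b 0 = a - 2`, so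
-- the walk `u_j … v v_1 w` is rainbow.
def hubwColor (b t : ℕ) : ℕ := b - 1 - t % b

lemma eq_of_hubColor_eq (hb : 0 < b) {t t' : ℕ} (hv : hubvColor a b t = hubvColor a b t')
    (hw : hubwColor b t = hubwColor b t') : t = t' := by
  unfold hubvColor at hv
  unfold hubwColor at hw
  have := Nat.mod_lt t hb
  have := Nat.mod_lt t' hb
  rw [← Nat.div_add_mod t b, ← Nat.div_add_mod t' b, show t / b = t' / b by omega,
    show t % b = t' % b by omega]

def edgeColor (a b n : ℕ) : ConV a n → ConV a n → ℕ
  | Sum.inl i, Sum.inl i' => min i.1 i'.1 % 2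
  | Sum.inl i, Sum.inr (Sum.inr true) | Sum.inr (Sum.inr true), Sum.inl i =>
    hubvColor a b (i / 3)
  | Sum.inl i, Sum.inr (Sum.inr false) | Sum.inr (Sum.inr false), Sum.inl i =>
    hubwColor b (i / 3)
  | Sum.inr (Sum.inl j), Sum.inr (Sum.inl j') => min j.1 j'.1
  | Sum.inr (Sum.inl j), Sum.inr (Sum.inr true) | Sum.inr (Sum.inr true), Sum.inr (Sum.inl j) =>
    j
  | _, _ => 0

lemma edgeColor_comm (x y : ConV a n) : edgeColor a b n x y = edgeColor a b n y x := by
  rcases x with i | j | _ | _ <;> rcases y with i' | j' | _ | _ <;> simp [edgeColor, min_comm]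

def coloring (a b n : ℕ) : Sym2 (ConV a n) → ℕ :=
  Sym2.lift ⟨edgeColor a b n, edgeColor_comm⟩

@[simp]
lemma coloring_mk (x y : ConV a n) : coloring a b n s(x, y) = edgeColor a b n x y := rfl

lemma coloring_pathEdge {m : ℕ} (hm : m < a - 2) : coloring a b n (pathEdge a n m) = m := by
  rw [pathEdge, coloring_mk, pathVert_of_lt hm]
  unfold pathVert
  split_ifs <;> simp [edgeColor]

lemma map_coloring_edges_pathWalk {j k : ℕ} (h : j + k ≤ a - 2) :
    (pathWalk a n j k h).edges.map (coloring a b n) = List.range' j k := by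
  rw [edges_pathWalk, List.map_map]
  conv_rhs => rw [← List.map_id (List.range' j k)]
  refine List.map_congr_left fun m hm => ?_
  rw [List.mem_range'_1] at hm
  exact coloring_pathEdge (by omega)

lemma usesColors_coloring (ha : 2 ≤ a) (hab : a ≤ b) (hn : n ≤ 3 * b * (b - a + 2)) :
    UsesColors (ConG a n) (coloring a b n) b := by
  have hv (i : Fin n) : hubvColor a b (i / 3) < b := by
    have : i / 3 / b < b - a + 2 := by
      apply Nat.div_lt_of_lt_mul
      apply Nat.div_lt_of_lt_mul
      have := i.2
      rw [← mul_assoc]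
      omega
    unfold hubvColor
    omega
  have hw (i : Fin n) : hubwColor b (i / 3) < b := by unfold hubwColor; omega
  intro e _
  induction e using Sym2.ind with
  | h x y =>
    rcases x with i | j | _ | _ <;> rcases y with i' | j' | _ | _ <;>
      simp [edgeColor, hv, hw] <;> omega

end Coloring

section UpperBound

variable {a b n : ℕ}

lemma coloring_pathVert_cyc {m : ℕ} (hm : a - 2 ≤ m) (i : Fin n) :
    coloring a b n s(pathVert a n m, cyc i) = hubvColor a b (i / 3) := by
  rw [coloring_mk, pathVert_of_le hm]
  rfl

lemma map_coloring_edges_cycWalk {j : ℕ} (hj : j ≤ a - 2) (i : Fin n) :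
    (cycWalk a n j hj i).edges.map (coloring a b n) =
      List.range' j (a - 2 - j) ++ [hubvColor a b (i / 3)] := by
  rw [cycWalk, Walk.edges_concat, List.map_concat, map_coloring_edges_pathWalk,
    coloring_pathVert_cyc (m := j + (a - 2 - j)) (n := n) (by omega), List.concat_eq_append]

lemma hasRainbowGeodesic_pathVert (ha : 2 ≤ a) {j k : ℕ} (h : j + k ≤ a - 2) :
    HasRainbowGeodesic (ConG a n) (coloring a b n) (pathVert a n j) (pathVert a n (j + k)) := by
  refine ⟨pathWalk a n j k h, length_eq_dist_of_lipschitz (fun _ _ => depth_le_of_adj) _ ?_, ?_⟩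
  · rw [length_pathWalk, depth_pathVert ha (by omega), depth_pathVert ha (by omega)]
    omega
  · rw [IsRainbow, map_coloring_edges_pathWalk]
    exact List.nodup_range'

lemma hasRainbowGeodesic_pathVert_cyc (ha : 2 ≤ a) {j : ℕ} (hj : j ≤ a - 2) (i : Fin n) :
    HasRainbowGeodesic (ConG a n) (coloring a b n) (pathVert a n j) (cyc i) := by
  refine ⟨cycWalk a n j hj i, by rw [length_cycWalk, dist_pathVert_cyc ha hj], ?_⟩
  rw [IsRainbow, map_coloring_edges_cycWalk, List.nodup_append]
  refine ⟨List.nodup_range', List.nodup_singleton _, fun x hx y hy => ?_⟩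
  rw [List.mem_range'_1] at hx
  rw [List.mem_singleton.1 hy, hubvColor]
  have := Nat.le_add_right (a - 2) (i / 3 / b)
  omega

lemma hasRainbowGeodesic_pathVert_hubw (ha : 2 ≤ a) (hab : a ≤ b) (hn : 0 < n) {j : ℕ}
    (hj : j ≤ a - 2) :
    HasRainbowGeodesic (ConG a n) (coloring a b n) (pathVert a n j) (hubw a n) := by
  let p := (cycWalk a n j hj ⟨0, hn⟩).concat (adj_cyc_hub false)
  refine ⟨p, length_eq_dist_of_lipschitz (fun _ _ => depth_le_of_adj) _ ?_, ?_⟩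
  · rw [depth_pathVert ha hj]
    simp only [p, cycWalk, Walk.length_concat, length_pathWalk, depth]
    omega
  · have hcol : p.edges.map (coloring a b n) = List.range' j (a - 2 - j) ++ [a - 2, b - 1] := by
      simp [p, Walk.edges_concat, map_coloring_edges_cycWalk, edgeColor, hubvColor, hubwColor]
    rw [IsRainbow, hcol, List.nodup_append]
    refine ⟨List.nodup_range',
      List.nodup_cons.2 ⟨by rw [List.mem_singleton]; omega, List.nodup_singleton _⟩,
      fun x hx y hy => ?_⟩
    rw [List.mem_range'_1] at hx
    rw [List.mem_pair] at hy
    omega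

lemma hasRainbowGeodesic_cyc_of_val_add_two {i i' : Fin n} (h : i.1 + 2 = i') :
    HasRainbowGeodesic (ConG a n) (coloring a b n) (cyc i) (cyc i') := by
  by_cases hadj : (ConG a n).Adj (cyc i) (cyc i')
  · exact hasRainbowGeodesic_of_adj hadj
  refine hasRainbowGeodesic_of_adj_adj (x := cyc ⟨i + 1, by omega⟩)
    (by simpa using Fin.ne_of_val_ne (by omega)) hadj (adj_cyc_of_val_add_one rfl)
    (adj_cyc_of_val_add_one (by simpa using h)) ?_
  simp only [coloring_mk, edgeColor, le_add_iff_nonneg_right, zero_le, inf_of_le_left]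
  omega

lemma hasRainbowGeodesic_cyc_cyc (hb : 0 < b) (i i' : Fin n) :
    HasRainbowGeodesic (ConG a n) (coloring a b n) (cyc i) (cyc i') := by
  by_cases hadj : (ConG a n).Adj (cyc i) (cyc i')
  · exact hasRainbowGeodesic_of_adj hadj
  by_cases hii' : i = i'
  · subst hii'
    exact hasRainbowGeodesic_self _
  have hne : (cyc i : ConV a n) ≠ cyc i' := by simpa
  by_cases hv : hubvColor a b (i / 3) = hubvColor a b (i' / 3)
  · by_cases hw : hubwColor b (i / 3) = hubwColor b (i' / 3)
    · -- same block of three, hence two apart: go through the middle vertex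
      have hdiv := eq_of_hubColor_eq hb hv hw
      have h1 : i.1 + 1 ≠ i' := fun h => hadj (adj_cyc_of_val_add_one h)
      have h2 : i'.1 + 1 ≠ i := fun h => hadj (adj_cyc_of_val_add_one h).symm
      have hii'' : i.1 ≠ i' := Fin.val_ne_of_ne hii'
      obtain h | h : i.1 + 2 = i' ∨ i'.1 + 2 = i := by omega
      · exact hasRainbowGeodesic_cyc_of_val_add_two h
      · exact (hasRainbowGeodesic_cyc_of_val_add_two h).symm
    · exact hasRainbowGeodesic_of_adj_adj hne hadj (adj_cyc_hub false) (adj_cyc_hub false).symm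
        (by simpa [edgeColor])
  · exact hasRainbowGeodesic_of_adj_adj hne hadj (adj_cyc_hub true) (adj_cyc_hub true).symm
      (by simpa [edgeColor])

lemma cyc_or_hubw_or_pathVert (x : ConV a n) :
    (∃ i, x = cyc i) ∨ x = hubw a n ∨ ∃ m ≤ a - 2, x = pathVert a n m := by
  rcases x with i | j | _ | _
  · exact .inl ⟨i, rfl⟩
  · exact .inr (.inr ⟨j, j.2.le, (pathVert_of_lt j.2).symm⟩)
  · exact .inr (.inl rfl)
  · exact .inr (.inr ⟨a - 2, le_rfl, (pathVert_of_le le_rfl).symm⟩)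

lemma isStrongRainbowColoring_coloring (ha : 2 ≤ a) (hab : a ≤ b) (hn : 0 < n) :
    IsStrongRainbowColoring (ConG a n) (coloring a b n) := by
  have hpath {m m' : ℕ} (hm : m ≤ m') (hm' : m' ≤ a - 2) :
      HasRainbowGeodesic (ConG a n) (coloring a b n) (pathVert a n m) (pathVert a n m') := by
    simpa [Nat.add_sub_cancel' hm] using hasRainbowGeodesic_pathVert (b := b) (n := n) ha
      (j := m) (k := m' - m) (by omega)
  refine isStrongRainbowColoring_of_forall fun u v => ?_
  rcases cyc_or_hubw_or_pathVert u with ⟨i, rfl⟩ | rfl | ⟨m, hm, rfl⟩ <;>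
    rcases cyc_or_hubw_or_pathVert v with ⟨i', rfl⟩ | rfl | ⟨m', hm', rfl⟩
  · exact hasRainbowGeodesic_cyc_cyc (by omega) i i'
  · exact hasRainbowGeodesic_of_adj (adj_cyc_hub false)
  · exact (hasRainbowGeodesic_pathVert_cyc ha hm' i).symm
  · exact hasRainbowGeodesic_of_adj (adj_cyc_hub false).symm
  · exact hasRainbowGeodesic_self _
  · exact (hasRainbowGeodesic_pathVert_hubw ha hab hn hm').symm
  · exact hasRainbowGeodesic_pathVert_cyc ha hm i'
  · exact hasRainbowGeodesic_pathVert_hubw ha hab hn hm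
  · rcases le_total m m' with h | h
    · exact hpath h hm'
    · exact (hpath h hm).symm

end UpperBound

section LowerBound

variable {a n : ℕ} {c : Sym2 (ConV a n) → ℕ}

lemma injOn_color_pathEdge (ha : 3 ≤ a) (hc : IsStrongRainbowColoring (ConG a n) c) :
    Set.InjOn (fun m => c (pathEdge a n m)) (Set.Iio (a - 2)) := by
  obtain ⟨p, -, -, hp⟩ := hc (pth ⟨0, by omega⟩) (hubv a n)
  intro m hm m' hm' h
  have hmem (m : ℕ) (hm : m < a - 2) : pathEdge a n m ∈ p.edges :=
    pathEdge_mem_edges p (by simp) (Nat.zero_le m) hm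
  exact pathEdge_inj hm hm' (List.inj_on_of_nodup_map hp (hmem m hm) (hmem m' hm') h)

lemma color_hubv_cyc_ne_color_pathEdge (ha : 3 ≤ a) (hc : IsStrongRainbowColoring (ConG a n) c)
    (i : Fin n) {m : ℕ} (hm : m < a - 2) : c s(hubv a n, cyc i) ≠ c (pathEdge a n m) := by
  obtain ⟨q, -, hq, hrb⟩ := hc (cyc i) (pth ⟨0, by omega⟩)
  have hdist : (ConG a n).dist (cyc i) (pth ⟨0, by omega⟩) = a - 1 := by
    rw [dist_comm, ← pathVert_of_lt, dist_pathVert_cyc (by omega) (Nat.zero_le _)]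
    omega
  -- by `depth`, the geodesic must step to `v` first and then run along the whole path
  cases q with
  | cons h q =>
    rename_i z
    have hdepth := le_add_length_of_lipschitz (fun _ _ => depth_le_of_adj) q.reverse
    rw [Walk.length_reverse] at hdepth
    rw [Walk.length_cons, hdist] at hq
    rcases z with i' | j | _ | _
    · simp only [depth] at hdepth
      omega
    · exact absurd h not_adj_cyc_pth
    · simp only [depth] at hdepth
      omega
    · have hmem : pathEdge a n m ∈ q.edges := by
        simpa using pathEdge_mem_edges q.reverse (by simp) (Nat.zero_le m) hm
      rw [isRainbow_cons_iff, Sym2.eq_swap] at hrb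
      exact fun heq => hrb.1 (heq ▸ List.mem_map_of_mem hmem)

lemma hubColors_ne (hc : IsStrongRainbowColoring (ConG a n) c) {i i' : Fin n}
    (hne : i ≠ i') (hnadj : ¬ (ConG a n).Adj (cyc i) (cyc i'))
    (hcommon : ∀ z, ¬ ((ConG a n).Adj (cyc i) (cyc z) ∧ (ConG a n).Adj (cyc z) (cyc i'))) :
    (c s(hubv a n, cyc i), c s(hubw a n, cyc i)) ≠
      (c s(hubv a n, cyc i'), c s(hubw a n, cyc i')) := by
  obtain ⟨p, -, hp, hrb⟩ := hc (cyc i) (cyc i')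
  rw [dist_eq_two (by simpa) hnadj (adj_cyc_hub true) (adj_cyc_hub true).symm] at hp
  intro heq
  simp only [Prod.mk.injEq] at heq
  cases p with
  | nil => exact hne rfl
  | cons h1 p =>
    cases p with
    | nil => simp at hp
    | cons h2 p =>
      cases p with
      | cons => simp at hp
      | nil =>
        rename_i z
        simp only [IsRainbow, Walk.edges_cons, Walk.edges_nil, List.map_cons, List.map_nil,
          List.nodup_cons, List.mem_singleton, List.not_mem_nil, List.nodup_nil] at hrb
        rcases z with z | j | _ | _
        · exact hcommon z ⟨h1, h2⟩
        · exact not_adj_cyc_pth h1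
        · exact hrb.1 (by rw [Sym2.eq_swap]; exact heq.2)
        · exact hrb.1 (by rw [Sym2.eq_swap]; exact heq.1)

end LowerBound

section Counting

open Finset

variable {a N k : ℕ}

lemma add_one_mod_of_lt {x n : ℕ} (h : x < n) :
    (x + 1) % n = if x + 1 = n then 0 else x + 1 := by
  split_ifs with hx
  · simp [hx]
  · exact Nat.mod_eq_of_lt (by omega)

lemma cyc_far_of_three_dvd {i i' : Fin (3 * N)} (hi : 3 ∣ i.1) (hi' : 3 ∣ i'.1)
    (hne : i ≠ i') :
    ¬ (ConG a (3 * N)).Adj (cyc i) (cyc i') ∧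
      ∀ z, ¬ ((ConG a (3 * N)).Adj (cyc i) (cyc z) ∧
        (ConG a (3 * N)).Adj (cyc z) (cyc i')) := by
  have hne' : i.1 ≠ i'.1 := Fin.val_ne_of_ne hne
  refine ⟨fun h => ?_, fun z ⟨h1, h2⟩ => ?_⟩
  · rw [adj_cyc_cyc_iff, add_one_mod_of_lt i.2, add_one_mod_of_lt i'.2] at h
    split_ifs at h <;> omega
  · rw [adj_cyc_cyc_iff, add_one_mod_of_lt i.2, add_one_mod_of_lt z.2] at h1
    rw [adj_cyc_cyc_iff, add_one_mod_of_lt z.2, add_one_mod_of_lt i'.2] at h2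
    split_ifs at h1 h2 <;> omega

lemma le_mul_of_isStrongRainbowColoring (ha : 3 ≤ a) {n : ℕ} (hn : n = 3 * N)
    {c : Sym2 (ConV a n) → ℕ} (hk : UsesColors (ConG a n) c k)
    (hc : IsStrongRainbowColoring (ConG a n) c) : N ≤ (k - (a - 2)) * k := by
  subst hn
  set P := (range (a - 2)).image fun m => c (pathEdge a (3 * N) m)
  have hP : #P = a - 2 := by
    rw [card_image_of_injOn, card_range]
    simpa using injOn_color_pathEdge ha hc
  have hPk : P ⊆ range k := by
    simp only [P, image_subset_iff, mem_range]
    exact fun m hm => hk _ (adj_pathVert_succ (by omega))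
  let tripleVert (t : Fin N) : Fin (3 * N) := ⟨3 * t, by omega⟩
  let f (t : Fin N) : ℕ × ℕ :=
    (c s(hubv a _, cyc (tripleVert t)), c s(hubw a _, cyc (tripleVert t)))
  have hf (t : Fin N) : f t ∈ (range k \ P) ×ˢ range k := by
    simp only [f, mem_product, mem_sdiff, mem_range]
    refine ⟨⟨hk _ (adj_cyc_hub true).symm, fun hP => ?_⟩, hk _ (adj_cyc_hub false).symm⟩
    obtain ⟨m, hm, heq⟩ := mem_image.1 hP
    exact color_hubv_cyc_ne_color_pathEdge ha hc _ (mem_range.1 hm) heq.symm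
  have hf_inj : Function.Injective f := by
    intro t t' h
    by_contra hne
    have hne' : tripleVert t ≠ tripleVert t' :=
      fun h => hne (Fin.ext (by simpa [tripleVert] using h))
    obtain ⟨hnadj, hcommon⟩ := cyc_far_of_three_dvd (a := a) (dvd_mul_right 3 (t : ℕ))
      (dvd_mul_right 3 (t' : ℕ)) hne'
    exact hubColors_ne hc hne' hnadj hcommon h
  calc N = #(univ : Finset (Fin N)) := by simp
    _ ≤ #((range k \ P) ×ˢ range k) := card_le_card_of_injOn f (fun t _ => hf t) hf_inj.injOn
    _ = (k - (a - 2)) * k := by rw [card_product, card_sdiff_of_subset hPk, card_range, hP]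

end Counting

/-- For `3 ≤ a ≤ b` and `n = 3b(b-a+2)`, the construction graph has `src(G) = b`. -/
theorem stmt_8 (a b : ℕ) (ha : 3 ≤ a) (hab : a ≤ b) :
    src (ConG a (3 * b * (b - a + 2))) = b := by
  refine src_eq_of_forall_le (coloring a b _) (usesColors_coloring (by omega) hab le_rfl)
    (isStrongRainbowColoring_coloring (by omega) hab (Nat.mul_pos (by omega) (by omega)))
    fun c k hk hc => ?_
  by_contra! hkb
  have hN := le_mul_of_isStrongRainbowColoring ha (mul_assoc _ _ _) hk hc
  have : (k - (a - 2)) * k < b * (b - a + 2) :=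
    (Nat.mul_lt_mul'' (by omega) hkb).trans_eq (Nat.mul_comm _ _)
  omega

end RC
end

section
/- Let 3 ≤ a ≤ b, n = 3b(b−a+2), and G as above (cycle C_n plus universal vertices v, w, plus a pendant path u_1,...,u_{a−2} attached to v). In any strong rainbow coloring c of G, for each cycle vertex v_i the path v_i, v, u_{a−2}, ..., u_1 is the unique path of length a−1 from v_i to u_1, hence this path is rainbow under c. -/
namespace RC

variable {V : Type*}

section Helpers

variable {a n : ℕ}

/-- level function: distance to `u_1` in the tree part. -/
def lvl (a : ℕ) {n : ℕ} : ConV a n → ℕ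
  | Sum.inl _ => a - 1
  | Sum.inr (Sum.inl j) => j.val
  | Sum.inr (Sum.inr true) => a - 2
  | Sum.inr (Sum.inr false) => a

lemma lvl_le_of_adj (ha : 3 ≤ a) {x y : ConV a n} (h : (ConG a n).Adj x y) :
    lvl a x ≤ lvl a y + 1 := by
  rw [ConG, SimpleGraph.fromRel_adj] at h
  obtain ⟨hne, h | h⟩ := h <;>
    rcases x with i | j | (_ | _) <;> rcases y with i' | j' | (_ | _) <;>
    simp_all [conRel, lvl] <;> omega

lemma eq_pth_of_lvl (ha : 3 ≤ a) {y : ConV a n} {k : ℕ} (hk : k < a - 2)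
    (h : lvl a y = k) : y = pth ⟨k, hk⟩ := by
  rcases y with i | j | (_ | _) <;>
    simp only [lvl] at h <;> first
      | (exfalso; omega)
      | (obtain rfl := h; simp)

lemma eq_hubv_of_lvl (ha : 3 ≤ a) {y : ConV a n} (h : lvl a y = a - 2) :
    y = hubv a n := by
  rcases y with i | j | (_ | _) <;> simp only [lvl] at h <;>
    first
      | rfl
      | (exfalso; have := j.isLt; omega)
      | (exfalso; omega)

lemma lvl_le_length' (ha : 3 ≤ a) {x y : ConV a n}
    (q : (ConG a n).Walk x y) : lvl a x ≤ q.length + lvl a y := by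
  induction q with
  | nil => simp
  | cons h q ih =>
    have := lvl_le_of_adj ha h
    simp only [SimpleGraph.Walk.length_cons]
    omega

lemma lvl_le_length (ha : 3 ≤ a) {h0 : 0 < a - 2} {x : ConV a n}
    (q : (ConG a n).Walk x (pth ⟨0, h0⟩)) : lvl a x ≤ q.length := by
  have := lvl_le_length' ha q
  simpa [lvl] using this

lemma adj_pth_succ (hj : j + 1 < a - 2) :
    (ConG a n).Adj (pth ⟨j + 1, hj⟩) (pth ⟨j, by omega⟩) := by
  rw [ConG, SimpleGraph.fromRel_adj]
  refine ⟨by simp, Or.inr ?_⟩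
  simp [conRel]

lemma adj_hubv_pth (ha : 3 ≤ a) (h3 : a - 3 < a - 2) :
    (ConG a n).Adj (hubv a n) (pth ⟨a - 3, h3⟩) := by
  rw [ConG, SimpleGraph.fromRel_adj]
  refine ⟨by simp, Or.inr ?_⟩
  simp [conRel]; omega

lemma adj_cyc_hubv (i : Fin n) : (ConG a n).Adj (cyc i) (hubv a n) := by
  rw [ConG, SimpleGraph.fromRel_adj]
  exact ⟨by simp, Or.inl trivial⟩

def down : ∀ (j : ℕ) (hj : j < a - 2),
    (ConG a n).Walk (pth ⟨j, hj⟩) (pth ⟨0, Nat.lt_of_le_of_lt (Nat.zero_le j) hj⟩)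
  | 0, _ => SimpleGraph.Walk.nil
  | j + 1, hj => SimpleGraph.Walk.cons (adj_pth_succ hj) (down j (by omega))

lemma down_length (j : ℕ) (hj : j < a - 2) : (down (n := n) j hj).length = j := by
  induction j with
  | zero => rfl
  | succ j ih => simp [down, ih]

lemma down_support (j : ℕ) (hj : j < a - 2) :
    (down (n := n) j hj).support =
      ((List.finRange (a - 2)).reverse.map pth).drop (a - 2 - 1 - j) := by
  induction j with
  | zero =>
    have hlen : ((List.finRange (a - 2)).reverse.map (pth (n := n))).length = a - 2 := by
      simp
    have hk : a - 2 - 1 - 0 < ((List.finRange (a - 2)).reverse.map (pth (n := n))).length := by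
      omega
    rw [List.drop_eq_getElem_cons hk]
    have : a - 2 - 1 - 0 + 1 = ((List.finRange (a-2)).reverse.map (pth (n := n))).length := by omega
    rw [this, List.drop_length]
    simp only [down, SimpleGraph.Walk.support_nil]
    congr 1
    rw [List.getElem_map, List.getElem_reverse, List.getElem_finRange]
    congr 1
    simp only [Fin.ext_iff, Fin.coe_cast, List.length_finRange]
    omega
  | succ j ih =>
    have hk : a - 2 - 1 - (j+1) < ((List.finRange (a - 2)).reverse.map (pth (n := n))).length := by
      simp; omega
    rw [List.drop_eq_getElem_cons hk]
    have h2 : a - 2 - 1 - (j + 1) + 1 = a - 2 - 1 - j := by omega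
    rw [h2]
    simp only [down, SimpleGraph.Walk.support_cons, ih]
    congr 1
    rw [List.getElem_map, List.getElem_reverse, List.getElem_finRange]
    congr 1
    simp only [Fin.ext_iff, Fin.coe_cast, List.length_finRange]
    omega

lemma down_uniq (ha : 3 ≤ a) : ∀ (j : ℕ) (hj : j < a - 2)
    (q : (ConG a n).Walk (pth ⟨j, hj⟩) (pth ⟨0, Nat.lt_of_le_of_lt (Nat.zero_le j) hj⟩)),
    q.length = j → q = down j hj := by
  intro j
  induction j with
  | zero =>
    intro hj q hq
    cases q with
    | nil => rfl
    | cons h q => simp at hq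
  | succ j ih =>
    intro hj q hq
    obtain ⟨y, h, q', rfl⟩ := SimpleGraph.Walk.exists_eq_cons_of_ne (by simp [Fin.ext_iff]) q
    simp only [SimpleGraph.Walk.length_cons, Nat.succ.injEq] at hq
    have h1 : lvl a y ≤ q'.length := lvl_le_length ha q'
    have h2 : lvl a (pth (n := n) ⟨j+1, hj⟩) ≤ lvl a y + 1 := lvl_le_of_adj ha h
    have h3 : lvl a (pth (n := n) ⟨j+1, hj⟩) = j + 1 := rfl
    have h4 : lvl a y = j := by omega
    obtain rfl : y = pth ⟨j, Nat.lt_of_succ_lt hj⟩ :=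
      eq_pth_of_lvl ha (Nat.lt_of_succ_lt hj) h4
    rw [down]
    congr 1
    exact ih _ q' hq


lemma pth_injective : Function.Injective (pth (a := a) (n := n)) :=
  fun _ _ h => by simpa using h

lemma main_uniq (ha : 3 ≤ a) (i : Fin n) (h0 : 0 < a - 2) (h3 : a - 3 < a - 2)
    (q : (ConG a n).Walk (cyc i) (pth ⟨0, h0⟩)) (hq : q.length = a - 1) :
    q = SimpleGraph.Walk.cons (adj_cyc_hubv i)
        (SimpleGraph.Walk.cons (adj_hubv_pth ha h3) (down (a - 3) h3)) := by
  obtain ⟨y, h, q', rfl⟩ := SimpleGraph.Walk.exists_eq_cons_of_ne (by simp) q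
  simp only [SimpleGraph.Walk.length_cons] at hq
  have h1 : lvl a y ≤ q'.length := lvl_le_length ha q'
  have h2 : lvl a (cyc (a := a) i) ≤ lvl a y + 1 := lvl_le_of_adj ha h
  have h3' : lvl a (cyc (a := a) i) = a - 1 := rfl
  have h4 : lvl a y = a - 2 := by omega
  obtain rfl : y = hubv a n := eq_hubv_of_lvl ha h4
  obtain ⟨z, h', q'', rfl⟩ := SimpleGraph.Walk.exists_eq_cons_of_ne (by simp) q'
  simp only [SimpleGraph.Walk.length_cons] at hq
  have h5 : lvl a z ≤ q''.length := lvl_le_length ha q''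
  have h6 : lvl a (hubv a n) ≤ lvl a z + 1 := lvl_le_of_adj ha h'
  have h7 : lvl a (hubv a n) = a - 2 := rfl
  have h8 : lvl a z = a - 3 := by omega
  obtain rfl : z = pth ⟨a - 3, h3⟩ := eq_pth_of_lvl ha h3 h8
  have h9 : q''.length = a - 3 := by omega
  rw [down_uniq ha (a - 3) h3 q'' h9]

theorem main {a n : ℕ} (ha : 3 ≤ a)
    (c : Sym2 (ConV a n) → ℕ)
    (hc : ∀ u v : ConV a n,
      ∃ p : (ConG a n).Walk u v, p.IsPath ∧
        p.length = (ConG a n).dist u v ∧ (p.edges.map c).Nodup)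
    (i : Fin n) (h0 : 0 < a - 2) :
    ∃ p : (ConG a n).Walk (cyc i) (pth ⟨0, h0⟩),
      p.IsPath ∧ p.length = a - 1 ∧
      p.support =
        [cyc i, hubv a n] ++
          (List.finRange (a - 2)).reverse.map pth ∧
      (p.edges.map c).Nodup ∧
      ∀ q : (ConG a n).Walk (cyc i) (pth ⟨0, h0⟩),
        q.IsPath → q.length = a - 1 → q = p := by
  have h3 : a - 3 < a - 2 := by omega
  set p : (ConG a n).Walk (cyc i) (pth ⟨0, h0⟩) :=
    SimpleGraph.Walk.cons (adj_cyc_hubv i)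
      (SimpleGraph.Walk.cons (adj_hubv_pth ha h3) (down (a - 3) h3)) with hp
  have hlen : p.length = a - 1 := by
    simp only [hp, SimpleGraph.Walk.length_cons, down_length]
    omega
  have hsupp : p.support =
      [cyc i, hubv a n] ++ (List.finRange (a - 2)).reverse.map pth := by
    simp only [hp, SimpleGraph.Walk.support_cons, down_support]
    have : a - 2 - 1 - (a - 3) = 0 := by omega
    rw [this, List.drop_zero]
    rfl
  have hpath : p.IsPath := by
    rw [SimpleGraph.Walk.isPath_def, hsupp]
    simp only [List.cons_append, List.nil_append, List.nodup_cons]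
    refine ⟨?_, ?_, (List.nodup_reverse.mpr (List.nodup_finRange _)).map pth_injective⟩
    · simp
    · simp
  have huniq : ∀ q : (ConG a n).Walk (cyc i) (pth ⟨0, h0⟩),
      q.length = a - 1 → q = p := fun q hq => main_uniq ha i h0 h3 q hq
  refine ⟨p, hpath, hlen, hsupp, ?_, fun q _ hq => huniq q hq⟩
  obtain ⟨q, hqp, hqd, hqr⟩ := hc (cyc i) (pth ⟨0, h0⟩)
  have hd1 : (ConG a n).dist (cyc i) (pth ⟨0, h0⟩) ≤ a - 1 := by
    simpa [hlen] using SimpleGraph.dist_le p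
  have hd2 : a - 1 ≤ q.length := by
    have := lvl_le_length ha q
    simpa [lvl] using this
  have : q.length = a - 1 := by omega
  rw [huniq q this] at hqr
  exact hqr

end Helpers

/-- In the construction graph (with `3 ≤ a ≤ b`, `n = 3b(b-a+2)`), under any strong
rainbow coloring, for each cycle vertex `v_i` the path `v_i, v, u_{a-2}, …, u_1` is
the unique path of length `a-1` from `v_i` to `u_1`, and it is rainbow. -/
theorem stmt_9 (a b : ℕ) (ha : 3 ≤ a) (hab : a ≤ b)
    (c : Sym2 (ConV a (3 * b * (b - a + 2))) → ℕ)
    (hc : IsStrongRainbowColoring (ConG a (3 * b * (b - a + 2))) c)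
    (i : Fin (3 * b * (b - a + 2))) :
    ∃ p : (ConG a (3 * b * (b - a + 2))).Walk (cyc i) (pth ⟨0, by omega⟩),
      p.IsPath ∧ p.length = a - 1 ∧
      p.support =
        [cyc i, hubv a (3 * b * (b - a + 2))] ++
          (List.finRange (a - 2)).reverse.map pth ∧
      IsRainbow c p ∧
      ∀ q : (ConG a (3 * b * (b - a + 2))).Walk (cyc i) (pth ⟨0, by omega⟩),
        q.IsPath → q.length = a - 1 → q = p := by
  exact main ha c hc i (by omega)

end RC
end
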